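/- arXiv:1904.01358 — 3 statements merged into one kernel-verified Lean document; each statement's English description precedes it below -/
import Mathlib

section
/- For every partition λ and every number of variables n, the Schur polynomial s_λ(x_1,…,x_n), defined as the bialternant j_λ/v_n where v_n = ∏_{1≤i<j≤n}(x_i−x_j) is the Vandermonde determinant and j_λ = ∑_{σ∈S_n} sgn(σ) x^{σ(λ+δ)} with δ=(n−1,n−2,…,0), equals the generating function ∑_{T∈SSYT(λ,n)} x^{wt(T)}, the sum over all semistandard Young tableaux of shape λ with entries in {1,…,n}, where wt(T) is the weak composition whose i-th entry counts the boxes of T labeled i. -/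
open MvPolynomial

/-- The monomial `x^a` in `n` variables, for a weak composition `a` (recorded on `Fin n`). -/
noncomputable def xpow (n : ℕ) (a : Fin n → ℕ) : MvPolynomial (Fin n) ℤ :=
  ∏ i, X i ^ a i

/-- Semistandard Young tableaux of shape `lam` (a partition, given as a weakly decreasing
function `ℕ → ℕ` with finite support) with entries in `{1, …, n}`.  Rows weakly increase
left to right and columns strictly increase top to bottom; entries outside the diagram
are recorded as `0`. -/
structure SSYT (lam : ℕ → ℕ) (n : ℕ) where
  entry : ℕ → ℕ → ℕ
  pos : ∀ i j, j < lam i → 1 ≤ entry i j ∧ entry i j ≤ n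
  zero : ∀ i j, ¬ j < lam i → entry i j = 0
  rowWeak : ∀ i j j', j ≤ j' → j' < lam i → entry i j ≤ entry i j'
  colStrict : ∀ i i' j, i < i' → j < lam i → j < lam i' → entry i j < entry i' j

/-- The weight of a tableau: `T.wt k` is the number of boxes labelled `k`. -/
noncomputable def SSYT.wt {lam : ℕ → ℕ} {n : ℕ} (T : SSYT lam n) (k : ℕ) : ℕ :=
  {p : ℕ × ℕ | p.2 < lam p.1 ∧ T.entry p.1 p.2 = k}.ncard

/-- The monomial `x^{wt(T)}` associated to a semistandard Young tableau. -/
noncomputable def ssytMonomial {lam : ℕ → ℕ} {n : ℕ} (T : SSYT lam n) :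
    MvPolynomial (Fin n) ℤ :=
  ∏ i : Fin n, X i ^ T.wt ((i : ℕ) + 1)

/-- The Vandermonde determinant `v_n = ∏_{1 ≤ i < j ≤ n} (x_i - x_j)`. -/
noncomputable def vandermonde (n : ℕ) : MvPolynomial (Fin n) ℤ :=
  ∏ p ∈ Finset.univ.filter (fun p : Fin n × Fin n => p.1 < p.2), (X p.1 - X p.2)

/-- The bialternant `j_λ = ∑_{σ ∈ S_n} sgn(σ) x^{σ(λ+δ)}`, where `δ = (n-1, n-2, …, 0)`. -/
noncomputable def bialternant (n : ℕ) (lam : ℕ → ℕ) : MvPolynomial (Fin n) ℤ :=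
  ∑ σ : Equiv.Perm (Fin n),
    (Equiv.Perm.sign σ : ℤ) • ∏ i : Fin n, X (σ i) ^ (lam (i : ℕ) + (n - 1 - (i : ℕ)))

/-!
Induct on `n` by peeling off the largest letter `n + 1`. In a tableau of shape `λ` with
entries at most `n + 1`, the boxes labelled `n + 1` form a horizontal strip `λ / μ`, i.e. `μ`
interlaces `λ` (`λ (i + 1) ≤ μ i ≤ λ i`), and the other boxes form an arbitrary tableau of
shape `μ` with entries at most `n`. So the generating function of `SSYT(λ, n + 1)` is
`∑_μ x_{n+1}^{|λ| - |μ|} · (generating function of SSYT(μ, n))`.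

The bialternant satisfies the same recursion. In the alternant `det (x_i ^ a_j)` with
`a_j = λ_j + n - j`, the column operations `C_j ← C_j - x_{n+1}^{a_j - a_{j+1}} C_{j+1}` clear
the last row except for `x_{n+1}^{λ_n}`. Every remaining entry
`x_i^{a_j} - x_{n+1}^{a_j - a_{j+1}} x_i^{a_{j+1}}` is `x_i - x_{n+1}` times the geometric sum
`∑_{λ_{j+1} ≤ m ≤ λ_j} x_{n+1}^{λ_j - m} x_i^{m + n - 1 - j}`, and expanding the
determinant multilinearly in the columns gives one term `x_{n+1}^{|λ| - |μ|} j_μ(x_1, …, x_n)`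
per interlacing `μ`. Since `v_{n+1} = ∏_i (x_i - x_{n+1}) · v_n`, the two recursions match.
-/

open Finset

namespace Matrix

variable {R : Type*} [CommRing R]

theorem det_eq_of_forall_col_eq_smul_add_succ {n : ℕ} {A B : Matrix (Fin (n + 1)) (Fin (n + 1)) R}
    (c : Fin n → R) (A_last : ∀ i, A i (Fin.last n) = B i (Fin.last n))
    (A_castSucc : ∀ i (j : Fin n), A i j.castSucc = B i j.castSucc + c j * A i j.succ) :
    det A = det B := by
  rw [← det_submatrix_equiv_self Fin.revPerm A, ← det_submatrix_equiv_self Fin.revPerm B]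
  refine det_eq_of_forall_col_eq_smul_add_pred (c ∘ Fin.rev) (fun i => ?_) (fun i j => ?_)
  · simpa using A_last _
  · simpa [Fin.rev_succ, Fin.rev_castSucc] using A_castSucc (Fin.rev i) (Fin.rev j)

theorem det_of_sum_col {m ι : Type*} [Fintype m] [DecidableEq m] [DecidableEq ι]
    (s : m → Finset ι) (f : m → ι → m → R) :
    det (of fun i j => ∑ k ∈ s j, f j k i) =
      ∑ g ∈ Fintype.piFinset s, det (of fun i j => f j (g j) i) := by
  have hcol (M : m → m → R) : det (of fun i j => M j i) = detRowAlternating M := by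
    rw [← det_transpose]; rfl
  have h := (detRowAlternating (n := m) (R := R)).toMultilinearMap.map_sum_finset f s
  simp only [AlternatingMap.coe_multilinearMap] at h
  simp_rw [hcol, ← h]
  congr with j i
  simp

theorem det_of_pow_succ {n : ℕ} (x : Fin (n + 1) → R) (e : ℕ → ℕ)
    (he : ∀ j < n, e (j + 1) ≤ e j) :
    det (of fun i j : Fin (n + 1) => x i ^ e j) =
      x (Fin.last n) ^ e n * det (of fun i j : Fin n =>
        x i.castSucc ^ e j - x (Fin.last n) ^ (e j - e (j + 1)) * x i.castSucc ^ e (j + 1)) := by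
  set y := x (Fin.last n)
  let B : Matrix (Fin (n + 1)) (Fin (n + 1)) R := of fun i => Fin.lastCases (x i ^ e n)
    fun j : Fin n => x i ^ e j - y ^ (e j - e (j + 1)) * x i ^ e (j + 1)
  have hB : ∀ j : Fin n, B (Fin.last n) j.castSucc = 0 := fun j => by
    simp [B, y, ← pow_add, Nat.sub_add_cancel (he j j.isLt)]
  rw [det_eq_of_forall_col_eq_smul_add_succ (B := B) (fun j => y ^ (e j - e (j + 1)))
    (fun i => by simp [B]) (fun i j => by simp [B]), det_succ_row B (Fin.last n),
    Fin.sum_univ_castSucc]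
  simp only [Fin.val_last, hB, mul_zero, zero_mul, sum_const_zero, zero_add,
    Fin.succAbove_last, (Even.add_self n).neg_one_pow, one_mul]
  congr 1
  · simp [B, y]
  · congr 1
    ext i j
    simp [B, y]

end Matrix

theorem sub_mul_sum_Icc_pow_mul_pow {R : Type*} [CommRing R] (x y : R) {a b : ℕ} (hba : b ≤ a)
    (c : ℕ) :
    (x - y) * ∑ m ∈ Icc b a, y ^ (a - m) * x ^ (m + c) =
      x ^ (a + 1 + c) - y ^ (a + 1 - b) * x ^ (b + c) := by
  rw [← Ico_add_one_right_eq_Icc, sum_Ico_eq_sum_range]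
  calc (x - y) * ∑ k ∈ range (a + 1 - b), y ^ (a - (b + k)) * x ^ (b + k + c)
      = x ^ (b + c) *
          ((∑ k ∈ range (a + 1 - b), x ^ k * y ^ (a + 1 - b - 1 - k)) * (x - y)) := by
        rw [mul_sum, sum_mul, mul_sum]
        refine sum_congr rfl fun k _ => ?_
        rw [show a - (b + k) = a + 1 - b - 1 - k by omega]
        ring
    _ = x ^ (a + 1 + c) - y ^ (a + 1 - b) * x ^ (b + c) := by
        rw [geom_sum₂_mul, show a + 1 + c = b + c + (a + 1 - b) by omega, pow_add]
        ring

section ExtendByZero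

variable {n : ℕ}

def extendByZero (g : Fin n → ℕ) (i : ℕ) : ℕ :=
  if h : i < n then g ⟨i, h⟩ else 0

@[simp]
theorem extendByZero_apply_fin (g : Fin n → ℕ) (i : Fin n) : extendByZero g i = g i := by
  simp [extendByZero]

theorem extendByZero_of_le (g : Fin n → ℕ) {i : ℕ} (hi : n ≤ i) : extendByZero g i = 0 :=
  dif_neg (not_lt.2 hi)

theorem extendByZero_injective : Function.Injective (extendByZero (n := n)) :=
  fun g g' h => funext fun i => by simpa using congrFun h i

end ExtendByZero

def interlacing (lam : ℕ → ℕ) (n : ℕ) : Finset (Fin n → ℕ) :=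
  Fintype.piFinset fun i => Icc (lam (i + 1)) (lam i)

section Interlacing

variable {lam : ℕ → ℕ} {n : ℕ} {g : Fin n → ℕ}

theorem mem_interlacing :
    g ∈ interlacing lam n ↔ ∀ i : Fin n, lam (i + 1) ≤ g i ∧ g i ≤ lam i := by
  simp [interlacing]

theorem extendByZero_le_of_mem_interlacing (hg : g ∈ interlacing lam n) (i : ℕ) :
    extendByZero g i ≤ lam i := by
  by_cases hi : i < n
  · simpa [extendByZero, hi] using (mem_interlacing.1 hg ⟨i, hi⟩).2
  · simp [extendByZero, hi]

theorem le_extendByZero_of_mem_interlacing (hlen : ∀ i, n + 1 ≤ i → lam i = 0)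
    (hg : g ∈ interlacing lam n) (i : ℕ) : lam (i + 1) ≤ extendByZero g i := by
  by_cases hi : i < n
  · simpa [extendByZero, hi] using (mem_interlacing.1 hg ⟨i, hi⟩).1
  · simp [hlen (i + 1) (by omega)]

theorem antitone_extendByZero_of_mem_interlacing (hlam : Antitone lam)
    (hlen : ∀ i, n + 1 ≤ i → lam i = 0) (hg : g ∈ interlacing lam n) :
    Antitone (extendByZero g) := by
  intro i j hij
  rcases hij.eq_or_lt with rfl | hij
  · exact le_rfl
  · exact (extendByZero_le_of_mem_interlacing hg j).trans
      ((hlam hij).trans (le_extendByZero_of_mem_interlacing hlen hg i))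

end Interlacing

theorem det_of_pow_succ_eq_sum_interlacing {R : Type*} [CommRing R] {n : ℕ}
    (x : Fin (n + 1) → R) {lam : ℕ → ℕ} (hlam : ∀ j < n, lam (j + 1) ≤ lam j) :
    Matrix.det (Matrix.of fun i j : Fin (n + 1) => x i ^ (lam j + (n - j))) =
      (∏ i : Fin n, (x i.castSucc - x (Fin.last n))) * ∑ g ∈ interlacing lam n,
        x (Fin.last n) ^ (lam n + ∑ j : Fin n, (lam j - g j)) *
          Matrix.det (Matrix.of fun i j : Fin n => x i.castSucc ^ (g j + (n - 1 - j))) := by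
  rw [Matrix.det_of_pow_succ x (fun j => lam j + (n - j)) fun j hj => by have := hlam j hj; omega]
  set y := x (Fin.last n)
  calc _ = y ^ lam n * Matrix.det (Matrix.of fun i j : Fin n => ∑ m ∈ Icc (lam (j + 1)) (lam j),
        (x i.castSucc - y) * (y ^ (lam j - m) * x i.castSucc ^ (m + (n - 1 - j)))) := by
        rw [Nat.sub_self, add_zero]
        congr 2 with i j
        simp only [Matrix.of_apply]
        have := j.isLt
        have := hlam j j.isLt
        rw [← mul_sum, sub_mul_sum_Icc_pow_mul_pow _ _ (hlam j j.isLt),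
          show lam j + 1 + (n - 1 - j) = lam j + (n - j) by omega,
          show lam (j + 1) + (n - 1 - j) = lam (j + 1) + (n - (j + 1)) by omega,
          show lam j + (n - j) - (lam (j + 1) + (n - (j + 1))) = lam j + 1 - lam (j + 1) by omega]
    _ = y ^ lam n * ∑ g ∈ interlacing lam n, (∏ i : Fin n, (x i.castSucc - y)) *
        ((∏ j : Fin n, y ^ (lam j - g j)) *
          Matrix.det (Matrix.of fun i j : Fin n => x i.castSucc ^ (g j + (n - 1 - j)))) := by
        rw [Matrix.det_of_sum_col]
        refine congrArg _ (sum_congr rfl fun g _ => ?_)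
        exact (Matrix.det_mul_column _ _).trans (congrArg _ (Matrix.det_mul_row _ _))
    _ = _ := by
        simp only [prod_pow_eq_pow_sum, mul_sum, pow_add]
        refine sum_congr rfl fun g _ => ?_
        ring

theorem bialternant_eq_det (n : ℕ) (lam : ℕ → ℕ) :
    bialternant n lam = Matrix.det (Matrix.of fun i j : Fin n => X i ^ (lam j + (n - 1 - j))) := by
  rw [Matrix.det_apply, bialternant]
  refine sum_congr rfl fun σ _ => ?_
  rw [Units.smul_def]
  rfl

theorem bialternant_succ {n : ℕ} {lam : ℕ → ℕ} (hlam : ∀ j < n, lam (j + 1) ≤ lam j) :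
    bialternant (n + 1) lam = (∏ i : Fin n, (X i.castSucc - X (Fin.last n))) *
      ∑ g ∈ interlacing lam n, X (Fin.last n) ^ (lam n + ∑ j : Fin n, (lam j - g j)) *
        rename Fin.castSucc (bialternant n (extendByZero g)) := by
  rw [bialternant_eq_det, Nat.add_sub_cancel, det_of_pow_succ_eq_sum_interlacing _ hlam]
  refine congrArg _ (sum_congr rfl fun g _ => congrArg _ ?_)
  rw [bialternant_eq_det, AlgHom.map_det]
  congr 1 with i j
  simp

theorem vandermonde_eq_prod_prod (n : ℕ) :
    vandermonde n = ∏ j : Fin n, ∏ i : Fin n, if i < j then X i - X j else 1 := by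
  rw [vandermonde, prod_filter, Fintype.prod_prod_type_right]

theorem vandermonde_succ (n : ℕ) :
    vandermonde (n + 1) = (∏ i : Fin n, (X i.castSucc - X (Fin.last n))) *
      rename Fin.castSucc (vandermonde n) := by
  have h (i : Fin n) : ¬ Fin.last n < i.castSucc := not_lt.2 (Fin.le_last _)
  simp [vandermonde_eq_prod_prod, Fin.prod_univ_castSucc, map_prod, apply_ite, h, mul_comm]

namespace SSYT

variable {lam μ : ℕ → ℕ} {n : ℕ}

@[ext]
theorem ext {T U : SSYT lam n} (h : T.entry = U.entry) : T = U := by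
  cases T; cases U; simp_all

instance instUniqueZero : Unique (SSYT 0 n) where
  default := ⟨0, fun _ _ h => absurd h (Nat.not_lt_zero _), fun _ _ _ => rfl,
    fun _ _ _ _ h => absurd h (Nat.not_lt_zero _), fun _ _ _ _ h => absurd h (Nat.not_lt_zero _)⟩
  uniq T := SSYT.ext (funext₂ fun i j => T.zero i j (Nat.not_lt_zero _))

theorem finite_of_forall_le_eq_zero {N : ℕ} (hN : ∀ i, N ≤ i → lam i = 0) :
    Finite (SSYT lam n) := by
  let B := (range N).sup lam
  have hbound (T : SSYT lam n) (i j : ℕ) : T.entry i j < n + 1 := by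
    by_cases hj : j < lam i
    · exact Nat.lt_succ_of_le (T.pos i j hj).2
    · rw [T.zero i j hj]; exact n.succ_pos
  refine Finite.of_injective
    (fun T (i : Fin N) (j : Fin B) => (⟨T.entry i j, hbound T i j⟩ : Fin (n + 1)))
    fun T U h => SSYT.ext (funext₂ fun i j => ?_)
  by_cases hj : j < lam i
  · have hi : i < N := not_le.1 fun hi => by simp [hN i hi] at hj
    have hjB : j < B := hj.trans_le (le_sup (mem_range.2 hi))
    simpa using congrFun (congrFun h ⟨i, hi⟩) ⟨j, hjB⟩
  · rw [T.zero i j hj, U.zero i j hj]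

theorem succ_le_entry (hlam : Antitone lam) (T : SSYT lam n) {i j : ℕ} (hj : j < lam i) :
    i + 1 ≤ T.entry i j := by
  induction i with
  | zero => exact (T.pos 0 j hj).1
  | succ i ih =>
    have hj' : j < lam i := hj.trans_le (hlam i.le_succ)
    exact (ih hj').trans_lt (T.colStrict i (i + 1) j i.lt_succ_self hj' hj)

theorem wt_eq_sum (T : SSYT lam n) {N : ℕ} (hN : ∀ i, N ≤ i → lam i = 0) (k : ℕ) :
    T.wt k = ∑ i ∈ range N, #{j ∈ range (lam i) | T.entry i j = k} := by
  have hset : {p : ℕ × ℕ | p.2 < lam p.1 ∧ T.entry p.1 p.2 = k} =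
      ((range N).sigma fun i => {j ∈ range (lam i) | T.entry i j = k}).map
        (Equiv.sigmaEquivProd ℕ ℕ).toEmbedding := by
    ext ⟨i, j⟩
    simp only [Set.mem_ofPred_eq, mem_coe, mem_map_equiv, Equiv.sigmaEquivProd_symm_apply,
      mem_sigma, mem_range, mem_filter]
    exact ⟨fun h => ⟨not_le.1 fun hi => by simp [hN i hi] at h, h⟩, And.right⟩
  rw [SSYT.wt, hset, Set.ncard_coe_finset, card_map, card_sigma]

def rowCount (T : SSYT lam (n + 1)) (i : ℕ) : ℕ :=
  #{j ∈ range (lam i) | T.entry i j ≤ n}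

theorem rowCount_le (T : SSYT lam (n + 1)) (i : ℕ) : T.rowCount i ≤ lam i :=
  (card_filter_le _ _).trans_eq (card_range _)

theorem entry_le_iff_lt_rowCount (T : SSYT lam (n + 1)) {i j : ℕ} (hj : j < lam i) :
    T.entry i j ≤ n ↔ j < T.rowCount i := by
  constructor
  · intro h
    have hsub : range (j + 1) ⊆ {j ∈ range (lam i) | T.entry i j ≤ n} := fun j' hj' => by
      have hj'j : j' ≤ j := Nat.lt_succ_iff.1 (mem_range.1 hj')
      exact mem_filter.2 ⟨mem_range.2 (hj'j.trans_lt hj), (T.rowWeak i j' j hj'j hj).trans h⟩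
    simpa [rowCount] using card_le_card hsub
  · intro h
    by_contra hlt
    have hsub : {j ∈ range (lam i) | T.entry i j ≤ n} ⊆ range j := fun j' hj' => by
      obtain ⟨hj'i, hj'n⟩ := mem_filter.1 hj'
      exact mem_range.2 (not_le.1 fun hjj' =>
        hlt ((T.rowWeak i j j' hjj' (mem_range.1 hj'i)).trans hj'n))
    exact (card_le_card hsub).not_gt (by simpa [rowCount] using h)

theorem le_rowCount (hlam : Antitone lam) (T : SSYT lam (n + 1)) (i : ℕ) :
    lam (i + 1) ≤ T.rowCount i := by
  by_contra! h
  have hj : T.rowCount i < lam i := h.trans_le (hlam i.le_succ)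
  have hcol := T.colStrict i (i + 1) _ i.lt_succ_self hj h
  have := (T.pos (i + 1) _ h).2
  exact (lt_irrefl _) ((T.entry_le_iff_lt_rowCount hj).1 (by omega))

theorem rowCount_eq_zero (hlam : Antitone lam) (T : SSYT lam (n + 1)) {i : ℕ} (hi : n ≤ i) :
    T.rowCount i = 0 :=
  card_eq_zero.2 <| filter_eq_empty_iff.2 fun j hj => by
    have := T.succ_le_entry hlam (mem_range.1 hj)
    omega

theorem rowCount_eq_extendByZero (hlam : Antitone lam) (T : SSYT lam (n + 1)) :
    T.rowCount = extendByZero fun i : Fin n => T.rowCount i := by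
  funext i
  by_cases hi : i < n
  · simp [extendByZero, hi]
  · rw [extendByZero_of_le _ (not_lt.1 hi), T.rowCount_eq_zero hlam (not_lt.1 hi)]

def restrict (T : SSYT lam (n + 1)) : SSYT T.rowCount n where
  entry i j := if j < T.rowCount i then T.entry i j else 0
  pos i j hj := by
    have hj' := hj.trans_le (T.rowCount_le i)
    rw [if_pos hj]
    exact ⟨(T.pos i j hj').1, (T.entry_le_iff_lt_rowCount hj').2 hj⟩
  zero i j hj := if_neg hj
  rowWeak i j j' hjj' hj' := by
    rw [if_pos (hjj'.trans_lt hj'), if_pos hj']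
    exact T.rowWeak i j j' hjj' (hj'.trans_le (T.rowCount_le i))
  colStrict i i' j hii' hj hj' := by
    rw [if_pos hj, if_pos hj']
    exact T.colStrict i i' j hii' (hj.trans_le (T.rowCount_le i)) (hj'.trans_le (T.rowCount_le i'))

section ExtendStrip

variable (hlam : Antitone lam) (hle : ∀ i, μ i ≤ lam i) (hstrip : ∀ i, lam (i + 1) ≤ μ i)

def extendStrip (T : SSYT μ n) : SSYT lam (n + 1) where
  entry i j := if j < μ i then T.entry i j else if j < lam i then n + 1 else 0
  pos i j hj := by
    split_ifs with h
    · exact ⟨(T.pos i j h).1, (T.pos i j h).2.trans n.le_succ⟩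
    · exact ⟨n.succ_pos, le_rfl⟩
  zero i j hj := by rw [if_neg fun h => hj (h.trans_le (hle i)), if_neg hj]
  rowWeak i j j' hjj' hj' := by
    by_cases h' : j' < μ i
    · rw [if_pos (hjj'.trans_lt h'), if_pos h']
      exact T.rowWeak i j j' hjj' h'
    · rw [if_neg h', if_pos hj']
      split_ifs with h
      · exact (T.pos i j h).2.trans n.le_succ
      · exact le_rfl
      · exact Nat.zero_le _
  colStrict i i' j hii' hj hj' := by
    have h : j < μ i := hj'.trans_le ((hlam (Nat.succ_le_of_lt hii')).trans (hstrip i))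
    rw [if_pos h]
    split_ifs with h'
    · exact T.colStrict i i' j hii' h h'
    · exact Nat.lt_succ_of_le (T.pos i j h).2

theorem extendStrip_injective : Function.Injective (extendStrip (n := n) hlam hle hstrip) := by
  intro T U h
  ext i j
  by_cases hj : j < μ i
  · simpa [extendStrip, hj] using congrFun₂ (congrArg entry h) i j
  · rw [T.zero i j hj, U.zero i j hj]

theorem rowCount_extendStrip (T : SSYT μ n) : (extendStrip hlam hle hstrip T).rowCount = μ := by
  funext i
  rw [rowCount, ← card_range (μ i)]
  congr 1
  ext j
  have := hle i
  have := T.pos i j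
  rw [mem_filter, mem_range, mem_range]
  simp only [extendStrip]
  split_ifs <;> omega

theorem wt_extendStrip_of_ne (T : SSYT μ n) {k : ℕ} (hk : k ≠ n + 1) :
    (extendStrip hlam hle hstrip T).wt k = T.wt k := by
  rw [wt, wt]
  congr 1
  ext ⟨i, j⟩
  have := hle i
  simp only [Set.mem_ofPred_eq, extendStrip]
  split_ifs <;> omega

theorem wt_extendStrip_self (T : SSYT μ n) {N : ℕ} (hN : ∀ i, N ≤ i → lam i = 0) :
    (extendStrip hlam hle hstrip T).wt (n + 1) = ∑ i ∈ range N, (lam i - μ i) := by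
  rw [wt_eq_sum _ hN]
  refine sum_congr rfl fun i _ => ?_
  rw [← Nat.card_Ico]
  congr 1
  ext j
  have := hle i
  have := T.pos i j
  rw [mem_filter, mem_range, mem_Ico]
  simp only [extendStrip]
  split_ifs <;> omega

theorem ssytMonomial_extendStrip (T : SSYT μ n) :
    ssytMonomial (extendStrip hlam hle hstrip T) =
      X (Fin.last n) ^ (extendStrip hlam hle hstrip T).wt (n + 1) *
        rename Fin.castSucc (ssytMonomial T) := by
  rw [ssytMonomial, Fin.prod_univ_castSucc, mul_comm, ssytMonomial, map_prod]
  congr 1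
  refine prod_congr rfl fun i _ => ?_
  rw [map_pow, rename_X, Fin.val_castSucc, wt_extendStrip_of_ne _ _ _ _ (by omega)]

end ExtendStrip

theorem extendStrip_restrict (hlam : Antitone lam) (T : SSYT lam (n + 1)) :
    extendStrip hlam T.rowCount_le (T.le_rowCount hlam) T.restrict = T := by
  ext i j
  simp only [extendStrip, restrict]
  split_ifs with h h'
  · rfl
  · have := (T.pos i j h').2
    have := (T.entry_le_iff_lt_rowCount h').not.2 h
    omega
  · exact (T.zero i j h').symm

theorem mem_range_extendStrip_iff (hlam : Antitone lam) (hle : ∀ i, μ i ≤ lam i)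
    (hstrip : ∀ i, lam (i + 1) ≤ μ i) (T : SSYT lam (n + 1)) :
    T ∈ Set.range (extendStrip hlam hle hstrip) ↔ T.rowCount = μ := by
  constructor
  · rintro ⟨T', rfl⟩
    exact rowCount_extendStrip hlam hle hstrip T'
  · rintro rfl
    exact ⟨T.restrict, T.extendStrip_restrict hlam⟩

end SSYT

theorem finsum_ssytMonomial_succ {n : ℕ} {lam : ℕ → ℕ} (hlam : Antitone lam)
    (hlen : ∀ i, n + 1 ≤ i → lam i = 0) :
    ∑ᶠ T : SSYT lam (n + 1), ssytMonomial T = ∑ g ∈ interlacing lam n,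
      X (Fin.last n) ^ (lam n + ∑ j : Fin n, (lam j - g j)) *
        rename Fin.castSucc (∑ᶠ T : SSYT (extendByZero g) n, ssytMonomial T) := by
  classical
  have := SSYT.finite_of_forall_le_eq_zero (n := n + 1) hlen
  let _ := Fintype.ofFinite (SSYT lam (n + 1))
  rw [finsum_eq_sum_of_fintype, ← sum_fiberwise_of_maps_to (t := interlacing lam n)
    (g := fun T (i : Fin n) => T.rowCount i)
    fun T _ => mem_interlacing.2 fun i => ⟨T.le_rowCount hlam i, T.rowCount_le i⟩]
  refine sum_congr rfl fun g hg => ?_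
  have hle := extendByZero_le_of_mem_interlacing hg
  have hstrip := le_extendByZero_of_mem_interlacing hlen hg
  have := SSYT.finite_of_forall_le_eq_zero (lam := extendByZero g) (n := n)
    fun i hi => extendByZero_of_le g hi
  let _ := Fintype.ofFinite (SSYT (extendByZero g) n)
  have hfiber : univ.filter (fun T : SSYT lam (n + 1) => (fun i : Fin n => T.rowCount i) = g) =
      univ.image (SSYT.extendStrip hlam hle hstrip) := by
    ext T
    rw [mem_filter, mem_image]
    simp only [mem_univ, true_and]
    rw [← Set.mem_range, SSYT.mem_range_extendStrip_iff, ← extendByZero_injective.eq_iff,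
      ← T.rowCount_eq_extendByZero hlam]
  have hexp : ∑ i ∈ range (n + 1), (lam i - extendByZero g i) =
      lam n + ∑ j : Fin n, (lam j - g j) := by
    rw [sum_range_succ, extendByZero_of_le g le_rfl, Nat.sub_zero, add_comm,
      ← Fin.sum_univ_eq_sum_range (fun i => lam i - extendByZero g i)]
    simp
  rw [hfiber, sum_image fun _ _ _ _ h => SSYT.extendStrip_injective hlam hle hstrip h,
    finsum_eq_sum_of_fintype, map_sum, mul_sum]
  refine sum_congr rfl fun T _ => ?_
  rw [SSYT.ssytMonomial_extendStrip, SSYT.wt_extendStrip_self _ _ _ _ hlen, hexp]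

/-- **Littlewood's formula.**  For a partition `λ` (with at most `n` parts), the Schur
polynomial `s_λ = j_λ / v_n` equals the generating function of semistandard Young tableaux
of shape `λ` with entries in `{1, …, n}`; equivalently,
`j_λ = v_n · ∑_{T ∈ SSYT(λ,n)} x^{wt(T)}`. -/
theorem schur_bialternant_eq_ssyt_generating_function
    (n : ℕ) (lam : ℕ → ℕ)
    (hpart : ∀ i j, i ≤ j → lam j ≤ lam i)
    (hlen : ∀ i, n ≤ i → lam i = 0) :
    bialternant n lam = vandermonde n * ∑ᶠ T : SSYT lam n, ssytMonomial T := by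
  induction n generalizing lam with
  | zero =>
    obtain rfl : lam = 0 := funext fun i => hlen i i.zero_le
    simp [bialternant, vandermonde, ssytMonomial, finsum_unique]
  | succ n ih =>
    have hlam : Antitone lam := fun i j h => hpart i j h
    rw [bialternant_succ fun j _ => hlam j.le_succ, vandermonde_succ,
      finsum_ssytMonomial_succ hlam hlen, mul_assoc]
    refine congrArg (_ * ·) ?_
    rw [mul_sum]
    refine sum_congr rfl fun g hg => ?_
    have hg' := antitone_extendByZero_of_mem_interlacing hlam hlen hg
    rw [ih (extendByZero g) (fun i j h => hg' h) fun i hi => extendByZero_of_le g hi, map_mul]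
    ring
end

section
/- Let α be a strong composition that admits at least one α-compatible sequence, let β(α) be its termwise-maximal α-compatible sequence, and let a(α) be the weak composition whose i-th entry is the multiplicity of i in β(α). Then ∑_{β ⟲ α} ∏_i x_{β_i} = ∑_b x^b, where the right-hand sum is over all weak compositions b with b ≥ a(α) in dominance order and b^+ ⊨ a(α)^+. In particular, the fundamental slide polynomial 𝔉_{a(α)} := ∑_{β ⟲ α} ∏_i x_{β_i} depends only on the weak composition a(α). -/
open MvPolynomial

/-- The monomial `x^b` (1-indexed variables) associated to a weak composition recorded
as a list. -/
noncomputable def xlistN (b : List ℕ) : MvPolynomial ℕ ℤ :=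
  ∏ i ∈ Finset.range b.length, X (i + 1) ^ b.getD i 0

/-- `b` has no trailing zeros (canonical representative of a weak composition). -/
def NTZ (b : List ℕ) : Prop := b.getLast? ≠ some 0

/-- Dominance order on weak compositions: every partial sum of `b` is at least the
corresponding partial sum of `a`. -/
def DomL (b a : List ℕ) : Prop := ∀ k, (a.take k).sum ≤ (b.take k).sum

/-- The positive part of a weak composition: delete all zero entries. -/
def posL (b : List ℕ) : List ℕ := b.filter (fun x => x ≠ 0)

/-- `β` refines `α`: `α` is obtained by summing consecutive (nonempty) blocks of `β`. -/
def Refines (β α : List ℕ) : Prop :=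
  ∃ L : List (List ℕ), L.flatten = β ∧ L.map List.sum = α ∧ ∀ l ∈ L, l ≠ []

/-- `β` is an `α`-compatible sequence: same length, weakly increasing, `β_i ≤ α_i`, and
strictly increasing wherever `α` is. -/
def IsCompatible (β α : List ℕ) : Prop :=
  β.length = α.length ∧ (∀ x ∈ β, 0 < x) ∧ List.Chain' (· ≤ ·) β ∧
  (∀ i, i < α.length → β.getD i 0 ≤ α.getD i 0) ∧
  (∀ i, i + 1 < α.length → α.getD i 0 < α.getD (i + 1) 0 → β.getD i 0 < β.getD (i + 1) 0)

/-- The weak composition `a(α)` whose `i`-th entry is the multiplicity of `i` in a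
weakly increasing sequence `βm` (recorded without trailing zeros). -/
def multComp (βm : List ℕ) : List ℕ :=
  (List.range (βm.foldr max 0)).map (fun i => βm.count (i + 1))

/-!
A weakly increasing sequence `β` of positive integers is determined by its multiplicity vector
`multComp β`, and `∏ᵢ x_{βᵢ} = x^{multComp β}`. So it suffices to show that `multComp` maps the
`α`-compatible sequences bijectively onto the weak compositions on the right-hand side.

By maximality, every ascent of `β(α)` is an ascent of `α`, hence `β ⟲ α` iff `β ⟲ β(α)`.
For weakly increasing `β`, the partial sums of `multComp β` are the counts `#{i | βᵢ ≤ k}`.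
For weakly increasing `β` and `γ` of the same length, `β ≤ γ` termwise iff the counts of `β`
dominate those of `γ`, which is dominance of `multComp β` over `multComp γ`; and every ascent
of `γ` is an ascent of `β` iff every count of `γ` is a count of `β`, which (zero entries having
no effect on partial sums) is the refinement `(multComp β)⁺ ⊨ (multComp γ)⁺`.
-/

theorem getD_mem {l : List ℕ} {i : ℕ} (hi : i < l.length) : l.getD i 0 ∈ l := by
  rw [List.getD_eq_getElem _ _ hi]
  exact List.getElem_mem hi

theorem lt_countP_le_iff {l : List ℕ} (hl : l.Pairwise (· ≤ ·)) {k i : ℕ}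
    (hi : i < l.length) : i < l.countP (· ≤ k) ↔ l.getD i 0 ≤ k := by
  induction l generalizing i with
  | nil => simp at hi
  | cons x t ih =>
    rw [List.pairwise_cons] at hl
    by_cases hx : x ≤ k
    · cases i with
      | zero => simp [hx]
      | succ i => simpa [hx] using ih hl.2 (by simpa using hi)
    · have ht : t.countP (· ≤ k) = 0 :=
        List.countP_eq_zero.2 fun y hy => by simpa using (lt_of_not_ge hx).trans_le (hl.1 y hy)
      have hcount : (x :: t).countP (· ≤ k) = 0 := by simp [hx, ht]
      rw [hcount, iff_false_intro (Nat.not_lt_zero i), false_iff]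
      cases i with
      | zero => simpa using hx
      | succ i =>
        have := hl.1 _ (getD_mem (Nat.lt_of_succ_lt_succ hi))
        rw [List.getD_cons_succ]
        omega

theorem countP_le_eq_succ_iff {l : List ℕ} (hl : l.Pairwise (· ≤ ·)) {k i : ℕ}
    (hi : i + 1 < l.length) :
    l.countP (· ≤ k) = i + 1 ↔ l.getD i 0 ≤ k ∧ k < l.getD (i + 1) 0 := by
  have h₁ := lt_countP_le_iff hl (k := k) (by omega : i < l.length)
  have h₂ := lt_countP_le_iff hl (k := k) hi
  rw [← not_le, ← h₁, ← h₂]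
  omega

theorem forall_getD_le_iff_countP_le {β γ : List ℕ} (hβ : β.Pairwise (· ≤ ·))
    (hγ : γ.Pairwise (· ≤ ·)) (hlen : β.length = γ.length) :
    (∀ i < γ.length, β.getD i 0 ≤ γ.getD i 0) ↔
      ∀ k, γ.countP (· ≤ k) ≤ β.countP (· ≤ k) := by
  constructor
  · intro hle k
    obtain hc | hc := Nat.eq_zero_or_pos (γ.countP (· ≤ k))
    · exact hc ▸ Nat.zero_le _
    have hcγ : γ.countP (· ≤ k) ≤ γ.length := List.countP_le_length
    have hk := (lt_countP_le_iff hγ (by omega)).1 (Nat.sub_one_lt_of_lt hc)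
    have := (lt_countP_le_iff hβ (by omega)).2 ((hle _ (by omega)).trans hk)
    omega
  · intro hcount i hi
    exact (lt_countP_le_iff hβ (hlen ▸ hi)).1
      (((lt_countP_le_iff hγ hi).2 le_rfl).trans_le (hcount _))

theorem ascents_iff_range_countP_subset {β γ : List ℕ} (hβ : β.Pairwise (· ≤ ·))
    (hβpos : ∀ x ∈ β, 0 < x) (hγ : γ.Pairwise (· ≤ ·)) (hlen : β.length = γ.length) :
    (∀ i, i + 1 < γ.length → γ.getD i 0 < γ.getD (i + 1) 0 → β.getD i 0 < β.getD (i + 1) 0) ↔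
      Set.range (fun k => γ.countP (· ≤ k)) ⊆ Set.range (fun m => β.countP (· ≤ m)) := by
  constructor
  · rintro hasc _ ⟨k, rfl⟩
    have hcγ : γ.countP (· ≤ k) ≤ γ.length := List.countP_le_length
    obtain hc | hc | hc : γ.countP (· ≤ k) = 0 ∨ γ.countP (· ≤ k) = γ.length ∨
        ∃ i, i + 1 < γ.length ∧ γ.countP (· ≤ k) = i + 1 := by
      rcases Nat.eq_zero_or_pos (γ.countP (· ≤ k)) with h | h
      · exact .inl h
      · rcases hcγ.eq_or_lt with h' | h'
        · exact .inr (.inl h')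
        · exact .inr (.inr ⟨γ.countP (· ≤ k) - 1, by omega, by omega⟩)
    · refine ⟨0, ?_⟩
      simp only [hc, List.countP_eq_zero, decide_eq_true_eq, nonpos_iff_eq_zero]
      exact fun x hx => (hβpos x hx).ne'
    · refine ⟨β.sum, ?_⟩
      simp only [hc, ← hlen, List.countP_eq_length, decide_eq_true_eq]
      exact fun x hx => List.le_sum_of_mem hx
    · obtain ⟨i, hi, hci⟩ := hc
      obtain ⟨hik, hki⟩ := (countP_le_eq_succ_iff hγ hi).1 hci
      refine ⟨β.getD i 0, ?_⟩
      dsimp only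
      rw [hci, countP_le_eq_succ_iff hβ (by omega)]
      exact ⟨le_rfl, hasc i hi (hik.trans_lt hki)⟩
  · intro hsub i hi hasc
    obtain ⟨m, hm⟩ := hsub ⟨γ.getD i 0, (countP_le_eq_succ_iff hγ hi).2 ⟨le_rfl, hasc⟩⟩
    obtain ⟨him, hmi⟩ := (countP_le_eq_succ_iff hβ (by omega)).1 hm
    exact him.trans_lt hmi

theorem getD_set_eq_ite {l : List ℕ} {i : ℕ} (hi : i < l.length) (a j : ℕ) :
    (l.set i a).getD j 0 = if j = i then a else l.getD j 0 := by
  split_ifs with hj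
  · rw [hj, List.getD_eq_getElem?_getD, List.getElem?_set_self hi, Option.getD_some]
  · rw [List.getD_eq_getElem?_getD, List.getElem?_set_ne (Ne.symm hj),
      ← List.getD_eq_getElem?_getD]

theorem isChain_le_iff_getD {l : List ℕ} :
    l.IsChain (· ≤ ·) ↔ ∀ i, i + 1 < l.length → l.getD i 0 ≤ l.getD (i + 1) 0 := by
  rw [List.isChain_iff_getElem]
  refine forall_congr' fun i => ⟨fun h hi => ?_, fun h hi => ?_⟩ <;>
    simpa [List.getD_eq_getElem?_getD, List.getElem?_eq_getElem, hi, Nat.lt_of_succ_lt hi] using h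

theorem pos_iff_getD {l : List ℕ} : (∀ x ∈ l, 0 < x) ↔ ∀ i < l.length, 0 < l.getD i 0 := by
  simp +contextual [List.forall_mem_iff_getElem, List.getD_eq_getElem?_getD]

theorem IsCompatible.pairwise {β α : List ℕ} (h : IsCompatible β α) : β.Pairwise (· ≤ ·) :=
  List.isChain_iff_pairwise.1 h.2.2.1

theorem isCompatible_iff_countP {β γ : List ℕ} (hβ : β.Pairwise (· ≤ ·))
    (hβpos : ∀ x ∈ β, 0 < x) (hγ : γ.Pairwise (· ≤ ·)) :
    IsCompatible β γ ↔ β.length = γ.length ∧ (∀ k, γ.countP (· ≤ k) ≤ β.countP (· ≤ k)) ∧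
      Set.range (fun k => γ.countP (· ≤ k)) ⊆ Set.range (fun m => β.countP (· ≤ m)) := by
  constructor
  · rintro ⟨hlen, -, -, hle, hasc⟩
    exact ⟨hlen, (forall_getD_le_iff_countP_le hβ hγ hlen).1 hle,
      (ascents_iff_range_countP_subset hβ hβpos hγ hlen).1 hasc⟩
  · rintro ⟨hlen, hdom, hsub⟩
    exact ⟨hlen, hβpos, List.isChain_iff_pairwise.2 hβ,
      (forall_getD_le_iff_countP_le hβ hγ hlen).2 hdom,
      (ascents_iff_range_countP_subset hβ hβpos hγ hlen).2 hsub⟩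

/-- Otherwise raising `βm_i` by one would give a larger compatible sequence. -/
theorem getD_lt_getD_of_maximal {α βm : List ℕ} (hβm : IsCompatible βm α)
    (hmax : ∀ β : List ℕ, IsCompatible β α → ∀ i, i < β.length → β.getD i 0 ≤ βm.getD i 0)
    {i : ℕ} (hi : i + 1 < α.length) (hasc : βm.getD i 0 < βm.getD (i + 1) 0) :
    α.getD i 0 < α.getD (i + 1) 0 := by
  obtain ⟨hlen, hpos, hchain, hle, hstrict⟩ := hβm
  by_contra! hflat
  set β := βm.set i (βm.getD i 0 + 1)
  have hget := getD_set_eq_ite (l := βm) (i := i) (by omega) (βm.getD i 0 + 1)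
  have hβ : IsCompatible β α := by
    refine ⟨by simp [β, hlen], pos_iff_getD.2 fun j hj => ?_, isChain_le_iff_getD.2 fun j hj => ?_,
      fun j hj => ?_, fun j hj hj' => ?_⟩
    · have := pos_iff_getD.1 hpos j (by simpa [β] using hj)
      rw [hget]; split_ifs <;> subst_vars <;> omega
    · have := isChain_le_iff_getD.1 hchain j (by simpa [β] using hj)
      rw [hget, hget]; split_ifs <;> subst_vars <;> omega
    · have := hle j hj
      have := hle (i + 1) hi
      rw [hget]; split_ifs <;> subst_vars <;> omega
    · have := hstrict j hj hj'
      have := isChain_le_iff_getD.1 hchain j (by omega)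
      rw [hget, hget]; split_ifs <;> subst_vars <;> omega
  have := hmax β hβ i (by simp [β]; omega)
  rw [hget, if_pos rfl] at this
  omega

theorem isCompatible_iff_of_maximal {α βm : List ℕ} (hβm : IsCompatible βm α)
    (hmax : ∀ β : List ℕ, IsCompatible β α → ∀ i, i < β.length → β.getD i 0 ≤ βm.getD i 0)
    (β : List ℕ) : IsCompatible β α ↔ IsCompatible β βm := by
  have ⟨hlen, _, _, hle, hstrict⟩ := hβm
  constructor
  · intro hβ
    have ⟨hβlen, hpos, hchain, _, hβstrict⟩ := hβ
    exact ⟨hβlen.trans hlen.symm, hpos, hchain, fun i hi => hmax β hβ i (by omega),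
      fun i hi h => hβstrict i (by omega) (getD_lt_getD_of_maximal hβm hmax (by omega) h)⟩
  · rintro ⟨hβlen, hpos, hchain, hβle, hβstrict⟩
    exact ⟨hβlen.trans hlen, hpos, hchain, fun i hi => (hβle i (by omega)).trans (hle i hi),
      fun i hi h => hβstrict i (by omega) (hstrict i hi h)⟩

theorem le_foldr_max {l : List ℕ} {x : ℕ} (hx : x ∈ l) : x ≤ l.foldr max 0 :=
  List.le_max_of_le hx le_rfl

theorem foldr_max_mem {l : List ℕ} (hne : l ≠ []) : l.foldr max 0 ∈ l :=
  List.maximum_mem (List.foldr_max_of_ne_nil hne).symm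

theorem getD_multComp (l : List ℕ) (i : ℕ) :
    (multComp l).getD i 0 = if i < l.foldr max 0 then l.count (i + 1) else 0 := by
  unfold multComp
  split_ifs with h
  · rw [List.getD_eq_getElem _ _ (by simpa using h)]; simp
  · rw [List.getD_eq_default]; simpa using h

theorem length_multComp (l : List ℕ) : (multComp l).length = l.foldr max 0 := by
  simp [multComp]

theorem prod_map_X_eq_xlistN_multComp {β : List ℕ} (hβ : ∀ x ∈ β, 0 < x) :
    (β.map fun b => (X b : MvPolynomial ℕ ℤ)).prod = xlistN (multComp β) := by
  have hsub : β.toFinset ⊆ Finset.Ico 1 (β.foldr max 0 + 1) := fun x hx => by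
    rw [List.mem_toFinset] at hx
    exact Finset.mem_Ico.2 ⟨hβ x hx, Nat.lt_succ_of_le (le_foldr_max hx)⟩
  rw [Finset.prod_list_map_count, Finset.prod_subset hsub, Finset.prod_Ico_eq_prod_range]
  · rw [xlistN, length_multComp, add_tsub_cancel_right]
    refine Finset.prod_congr rfl fun i hi => ?_
    rw [getD_multComp, if_pos (Finset.mem_range.1 hi), add_comm]
  · intro x _ hx
    rw [List.count_eq_zero.2 (by simpa using hx), pow_zero]

theorem sum_map_count_range_succ (l : List ℕ) (n : ℕ) :
    ((List.range n).map fun i => l.count (i + 1)).sum = l.countP (fun x => 0 < x ∧ x ≤ n) := by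
  induction n with
  | zero => exact (List.countP_eq_zero.2 fun x _ => by simp; omega).symm
  | succ n ih =>
    rw [List.range_succ, List.map_append, List.sum_append, ih, List.map_singleton,
      List.sum_singleton]
    clear ih
    induction l with
    | nil => rfl
    | cons x t ih => simp only [List.countP_cons, List.count_cons]; grind

theorem sum_take_multComp {l : List ℕ} (hl : ∀ x ∈ l, 0 < x) (k : ℕ) :
    ((multComp l).take k).sum = l.countP (· ≤ k) := by
  rw [multComp, ← List.map_take, List.take_range, sum_map_count_range_succ]
  refine List.countP_congr fun x hx => ?_
  have := le_foldr_max hx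
  have := hl x hx
  simp only [decide_eq_true_eq]
  omega

theorem sum_multComp {l : List ℕ} (hl : ∀ x ∈ l, 0 < x) : (multComp l).sum = l.length := by
  rw [← List.take_length (l := multComp l), sum_take_multComp hl, List.countP_eq_length]
  simpa [length_multComp] using fun x hx => le_foldr_max hx

theorem ntz_multComp {l : List ℕ} (hl : ∀ x ∈ l, 0 < x) : NTZ (multComp l) := by
  rcases eq_or_ne l [] with rfl | hne
  · simp [NTZ, multComp]
  have hmem := foldr_max_mem hne
  obtain ⟨m, hm⟩ : ∃ m, l.foldr max 0 = m + 1 := Nat.exists_eq_add_one.2 (hl _ hmem)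
  rw [hm] at hmem
  simpa [NTZ, multComp, hm, List.range_succ, List.count_eq_zero] using hmem

def seqOfMultComp (b : List ℕ) : List ℕ :=
  (List.range b.length).flatMap fun i => List.replicate (b.getD i 0) (i + 1)

theorem count_succ_seqOfMultComp (b : List ℕ) (c : ℕ) :
    (seqOfMultComp b).count (c + 1) = b.getD c 0 := by
  rw [seqOfMultComp, List.count_flatMap, List.sum_map_eq_nsmul_single c]
  · by_cases hc : c < b.length <;> simp [List.count_range, hc]
  · intro i hi _
    simp [List.count_replicate, hi]

theorem pos_of_mem_seqOfMultComp {b : List ℕ} {x : ℕ} (hx : x ∈ seqOfMultComp b) : 0 < x := by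
  obtain ⟨i, -, hx⟩ := List.mem_flatMap.1 hx
  rw [List.eq_of_mem_replicate hx]
  exact i.succ_pos

theorem pairwise_seqOfMultComp (b : List ℕ) : (seqOfMultComp b).Pairwise (· ≤ ·) := by
  rw [seqOfMultComp, List.flatMap_def, List.pairwise_flatten, List.pairwise_map]
  refine ⟨fun l hl => ?_, List.pairwise_lt_range.imp fun hij x hx y hy => ?_⟩
  · obtain ⟨i, -, rfl⟩ := List.mem_map.1 hl
    exact List.pairwise_replicate.2 (.inr le_rfl)
  · rw [List.eq_of_mem_replicate hx, List.eq_of_mem_replicate hy]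
    omega

theorem succ_mem_seqOfMultComp_iff {b : List ℕ} {c : ℕ} :
    c + 1 ∈ seqOfMultComp b ↔ 0 < b.getD c 0 := by
  rw [← List.count_pos_iff, count_succ_seqOfMultComp]

theorem seqOfMultComp_multComp {β : List ℕ} (hpos : ∀ x ∈ β, 0 < x)
    (hs : β.Pairwise (· ≤ ·)) : seqOfMultComp (multComp β) = β := by
  refine List.Perm.eq_of_pairwise' (pairwise_seqOfMultComp _) hs (List.perm_iff_count.2 ?_)
  rintro (_ | c)
  · rw [List.count_eq_zero.2 fun h => (pos_of_mem_seqOfMultComp h).ne' rfl,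
      List.count_eq_zero.2 fun h => (hpos 0 h).ne' rfl]
  · rw [count_succ_seqOfMultComp, getD_multComp, ite_eq_left_iff, not_lt, eq_comm,
      List.count_eq_zero]
    exact fun hc h => (le_foldr_max h).not_gt (Nat.lt_succ_of_le hc)

theorem NTZ.getD_length_sub_one_pos {b : List ℕ} (hb : NTZ b) (hne : b ≠ []) :
    0 < b.getD (b.length - 1) 0 := by
  refine Nat.pos_of_ne_zero fun h => hb ?_
  rw [List.getLast?_eq_getElem?, ← h, List.getD_eq_getElem?_getD,
    List.getElem?_eq_getElem (by simpa [Nat.sub_lt_iff_lt_add, List.length_pos_iff] using hne)]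
  rfl

theorem foldr_max_seqOfMultComp {b : List ℕ} (hb : NTZ b) :
    (seqOfMultComp b).foldr max 0 = b.length := by
  refine le_antisymm (List.max_le_of_forall_le _ _ fun x hx => ?_) ?_
  · obtain ⟨c, rfl⟩ := Nat.exists_eq_add_one.2 (pos_of_mem_seqOfMultComp hx)
    by_contra! h
    rw [succ_mem_seqOfMultComp_iff, List.getD_eq_default _ _ (by omega)] at hx
    exact hx.false
  · rcases eq_or_ne b [] with rfl | hne
    · simp
    have hmem := succ_mem_seqOfMultComp_iff.2 (hb.getD_length_sub_one_pos hne)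
    rw [Nat.sub_add_cancel (List.length_pos_iff.2 hne)] at hmem
    exact le_foldr_max hmem

theorem multComp_seqOfMultComp {b : List ℕ} (hb : NTZ b) : multComp (seqOfMultComp b) = b := by
  refine List.ext_getElem (by rw [length_multComp, foldr_max_seqOfMultComp hb]) fun i h _ => ?_
  rw [← List.getD_eq_getElem _ 0, ← List.getD_eq_getElem _ 0, getD_multComp,
    if_pos (by simpa [length_multComp] using h), count_succ_seqOfMultComp]

theorem Refines.sum_eq {x y : List ℕ} (h : Refines x y) : x.sum = y.sum := by
  obtain ⟨L, rfl, rfl, -⟩ := h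
  exact List.sum_flatten

theorem Refines.range_sum_take_subset {x y : List ℕ} (h : Refines x y) :
    Set.range (fun k => (y.take k).sum) ⊆ Set.range (fun k => (x.take k).sum) := by
  obtain ⟨L, rfl, rfl, -⟩ := h
  rintro _ ⟨k, rfl⟩
  refine ⟨(L.take k).flatten.length, ?_⟩
  have hpre : (L.take k).flatten <+: L.flatten := by
    conv_rhs => rw [← List.take_append_drop k L]
    rw [List.flatten_append]
    exact List.prefix_append _ _
  simp only [← List.prefix_iff_eq_take.1 hpre, List.sum_flatten, List.map_take]

theorem refines_of_range_sum_take_subset {x y : List ℕ} (hx : ∀ v ∈ x, 0 < v)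
    (hy : ∀ v ∈ y, 0 < v) (hsum : x.sum = y.sum)
    (hsub : Set.range (fun k => (y.take k).sum) ⊆ Set.range (fun k => (x.take k).sum)) :
    Refines x y := by
  induction y generalizing x with
  | nil =>
    obtain rfl : x = [] := List.eq_nil_iff_forall_not_mem.2 fun v hv =>
      (hx v hv).ne' (List.sum_eq_zero_iff.1 hsum v hv)
    exact ⟨[], rfl, rfl, by simp⟩
  | cons c y ih =>
    obtain ⟨m, hm⟩ := hsub ⟨1, rfl⟩
    simp only [List.take_succ_cons, List.take_zero, List.sum_cons, List.sum_nil, add_zero] at hm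
    have hc : 0 < c := hy c List.mem_cons_self
    have hsub' : Set.range (fun k => (y.take k).sum) ⊆
        Set.range (fun k => ((x.drop m).take k).sum) := by
      rintro _ ⟨k, rfl⟩
      obtain ⟨m', hm'⟩ := hsub ⟨k + 1, rfl⟩
      simp only [List.take_succ_cons, List.sum_cons] at hm'
      rcases le_total m m' with h | h
      · refine ⟨m' - m, ?_⟩
        rw [← Nat.add_sub_cancel' h, List.take_add, List.sum_append] at hm'
        simp only at hm' ⊢
        omega
      · have : (x.take m').sum ≤ (x.take m).sum := List.monotone_sum_take x h
        exact ⟨0, by simp only [List.take_zero, List.sum_nil]; omega⟩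
    have hsplit := List.sum_take_add_sum_drop x m
    obtain ⟨L, hL, hLsum, hLne⟩ := ih (x := x.drop m) (fun v hv => hx v (List.mem_of_mem_drop hv))
      (fun v hv => hy v (List.mem_cons_of_mem _ hv)) (by simp at hsum; omega) hsub'
    refine ⟨x.take m :: L, by simp [hL], by simp [hLsum, hm], ?_⟩
    rintro l (_ | ⟨_, hl⟩)
    · rintro h; simp [h] at hm; omega
    · exact hLne l hl

theorem pos_of_mem_posL {l : List ℕ} {x : ℕ} (hx : x ∈ posL l) : 0 < x := by
  simp only [posL, List.mem_filter, decide_eq_true_eq] at hx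
  exact Nat.pos_of_ne_zero hx.2

theorem range_sum_take_cons (x : ℕ) (l : List ℕ) :
    Set.range (fun k => ((x :: l).take k).sum) =
      insert 0 ((x + ·) '' Set.range fun k => (l.take k).sum) := by
  ext s
  simp only [Set.mem_range, Set.mem_insert_iff, Set.mem_image]
  constructor
  · rintro ⟨_ | k, rfl⟩
    · simp
    · exact .inr ⟨_, ⟨k, rfl⟩, by simp⟩
  · rintro (rfl | ⟨_, ⟨k, rfl⟩, rfl⟩)
    · exact ⟨0, rfl⟩
    · exact ⟨k + 1, by simp⟩

theorem range_sum_take_posL (l : List ℕ) :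
    Set.range (fun k => ((posL l).take k).sum) = Set.range (fun k => (l.take k).sum) := by
  induction l with
  | nil => rfl
  | cons x l ih =>
    by_cases hx : x = 0
    · subst hx
      rw [range_sum_take_cons, posL, List.filter_cons_of_neg (by simp), ← posL, ih]
      simp only [zero_add, Set.image_id']
      exact (Set.insert_eq_of_mem (Set.mem_range.2 ⟨0, rfl⟩)).symm
    · rw [posL, List.filter_cons_of_pos (by simpa using hx), ← posL, range_sum_take_cons,
        range_sum_take_cons, ih]

theorem sum_posL (l : List ℕ) : (posL l).sum = l.sum := by
  induction l with
  | nil => rfl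
  | cons x l ih => by_cases hx : x = 0 <;> simp_all [posL]

theorem range_sum_take_posL_multComp {l : List ℕ} (hl : ∀ x ∈ l, 0 < x) :
    Set.range (fun k => ((posL (multComp l)).take k).sum) =
      Set.range (fun k => l.countP (· ≤ k)) := by
  simp only [range_sum_take_posL, sum_take_multComp hl]

theorem dominates_and_refines_multComp_iff {β γ : List ℕ} (hβ : β.Pairwise (· ≤ ·))
    (hβpos : ∀ x ∈ β, 0 < x) (hγ : γ.Pairwise (· ≤ ·)) (hγpos : ∀ x ∈ γ, 0 < x) :
    DomL (multComp β) (multComp γ) ∧ Refines (posL (multComp β)) (posL (multComp γ)) ↔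
      IsCompatible β γ := by
  have hdom : DomL (multComp β) (multComp γ) ↔ ∀ k, γ.countP (· ≤ k) ≤ β.countP (· ≤ k) := by
    simp only [DomL, sum_take_multComp hβpos, sum_take_multComp hγpos]
  rw [isCompatible_iff_countP hβ hβpos hγ, hdom, ← range_sum_take_posL_multComp hβpos,
    ← range_sum_take_posL_multComp hγpos]
  constructor
  · rintro ⟨hd, hr⟩
    have hsum := hr.sum_eq
    rw [sum_posL, sum_posL, sum_multComp hβpos, sum_multComp hγpos] at hsum
    exact ⟨hsum, hd, hr.range_sum_take_subset⟩
  · rintro ⟨hlen, hd, hr⟩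
    refine ⟨hd, refines_of_range_sum_take_subset (fun _ => pos_of_mem_posL)
      (fun _ => pos_of_mem_posL) ?_ hr⟩
    rw [sum_posL, sum_posL, sum_multComp hβpos, sum_multComp hγpos, hlen]

theorem image_multComp_setOf_isCompatible {γ : List ℕ} (hγ : γ.Pairwise (· ≤ ·))
    (hγpos : ∀ x ∈ γ, 0 < x) :
    multComp '' {β | IsCompatible β γ} =
      {b | NTZ b ∧ DomL b (multComp γ) ∧ Refines (posL b) (posL (multComp γ))} := by
  ext b
  constructor
  · rintro ⟨β, hβ, rfl⟩
    exact ⟨ntz_multComp hβ.2.1,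
      (dominates_and_refines_multComp_iff hβ.pairwise hβ.2.1 hγ hγpos).2 hβ⟩
  · rintro ⟨hb, hdr⟩
    rw [← multComp_seqOfMultComp hb] at hdr
    exact ⟨seqOfMultComp b, (dominates_and_refines_multComp_iff (pairwise_seqOfMultComp b)
      (fun _ => pos_of_mem_seqOfMultComp) hγ hγpos).1 hdr, multComp_seqOfMultComp hb⟩

theorem injOn_multComp_setOf_isCompatible (γ : List ℕ) :
    Set.InjOn multComp {β | IsCompatible β γ} := fun β₁ h₁ β₂ h₂ he => by
  rw [← seqOfMultComp_multComp h₁.2.1 h₁.pairwise, he,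
    seqOfMultComp_multComp h₂.2.1 h₂.pairwise]

theorem fundamental_slide_monomial_expansion_general (α βm : List ℕ)
    (hβm : IsCompatible βm α)
    (hmax : ∀ β : List ℕ, IsCompatible β α → ∀ i, i < β.length →
      β.getD i 0 ≤ βm.getD i 0) :
    (∑ᶠ (β : List ℕ) (_ : IsCompatible β α),
        (β.map (fun b => (X b : MvPolynomial ℕ ℤ))).prod) =
      ∑ᶠ (b : List ℕ)
        (_ : NTZ b ∧ DomL b (multComp βm) ∧ Refines (posL b) (posL (multComp βm))),
        xlistN b := by
  calc (∑ᶠ (β : List ℕ) (_ : IsCompatible β α), (β.map fun b => (X b : MvPolynomial ℕ ℤ)).prod)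
      = ∑ᶠ β ∈ {β | IsCompatible β βm}, xlistN (multComp β) :=
        finsum_mem_congr (Set.ext (isCompatible_iff_of_maximal hβm hmax))
          fun β hβ => prod_map_X_eq_xlistN_multComp hβ.2.1
    _ = ∑ᶠ b ∈ multComp '' {β | IsCompatible β βm}, xlistN b :=
        (finsum_mem_image (injOn_multComp_setOf_isCompatible βm)).symm
    _ = _ := by rw [image_multComp_setOf_isCompatible hβm.pairwise hβm.2.1]; rfl

/-- For a strong composition `α` admitting a compatible sequence, with termwise-maximal
compatible sequence `β(α)` and `a(α)` the weak composition of multiplicities of `β(α)`: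
`∑_{β ⟲ α} ∏_i x_{β_i} = ∑_b x^b`, summed over weak compositions `b` with `b ≥ a(α)` in
dominance order and `b⁺ ⊨ a(α)⁺`.  In particular the fundamental slide polynomial
`𝔉_{a(α)} = ∑_{β ⟲ α} ∏_i x_{β_i}` depends only on `a(α)`. -/
theorem fundamental_slide_monomial_expansion (α βm : List ℕ)
    (hα : ∀ x ∈ α, 0 < x)
    (hβm : IsCompatible βm α)
    (hmax : ∀ β : List ℕ, IsCompatible β α → ∀ i, i < β.length →
      β.getD i 0 ≤ βm.getD i 0) :
    (∑ᶠ (β : List ℕ) (_ : IsCompatible β α),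
        (β.map (fun b => (X b : MvPolynomial ℕ ℤ))).prod) =
      ∑ᶠ (b : List ℕ)
        (_ : NTZ b ∧ DomL b (multComp βm) ∧ Refines (posL b) (posL (multComp βm))),
        xlistN b :=
  fundamental_slide_monomial_expansion_general α βm hβm hmax
end

section
/- For a weak composition a of length n, the fundamental slide polynomial 𝔉_a lies in the ring of quasisymmetric polynomials QSym_n if and only if a has the form 0^k α, a strong composition α of length n−k preceded by k zeros; moreover 𝔉_{0^k α} = F_α(x_1,…,x_n), the fundamental quasisymmetric polynomial. Hence the fundamental slide basis of polynomials in x_1,…,x_n lifts the fundamental quasisymmetric basis of QSym_n. -/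
open MvPolynomial

/-- The monomial `x^b` in `n` variables, for a weak composition recorded as a list. -/
noncomputable def xlist (n : ℕ) (b : List ℕ) : MvPolynomial (Fin n) ℤ :=
  ∏ i : Fin n, X i ^ b.getD (i : ℕ) 0

/-- The fundamental slide polynomial `𝔉_a` of a weak composition `a` of length `n`:
the sum of `x^b` over weak compositions `b` of length `n` with `b ≥ a` in dominance
order and `b⁺ ⊨ a⁺`. -/
noncomputable def FSlide (n : ℕ) (a : List ℕ) : MvPolynomial (Fin n) ℤ :=
  ∑ᶠ (b : List ℕ) (_ : b.length = n ∧ DomL b a ∧ Refines (posL b) (posL a)), xlist n b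

/-- The monomial quasisymmetric polynomial `M_α(x_1, …, x_n)`. -/
noncomputable def Mq (n : ℕ) (α : List ℕ) : MvPolynomial (Fin n) ℤ :=
  ∑ᶠ (b : List ℕ) (_ : b.length = n ∧ posL b = α), xlist n b

/-- The fundamental quasisymmetric polynomial `F_α(x_1, …, x_n)`. -/
noncomputable def Fq (n : ℕ) (α : List ℕ) : MvPolynomial (Fin n) ℤ :=
  ∑ᶠ (b : List ℕ) (_ : b.length = n ∧ Refines (posL b) α), xlist n b

/-- The ring (here: ℤ-submodule) `QSym_n` of quasisymmetric polynomials in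
`x_1, …, x_n`: the span of the monomial quasisymmetric polynomials. -/
noncomputable def QSymn (n : ℕ) : Submodule ℤ (MvPolynomial (Fin n) ℤ) :=
  Submodule.span ℤ {f | ∃ α : List ℕ, (∀ x ∈ α, 0 < x) ∧ f = Mq n α}

/-! ### Auxiliary lemmas on `posL` and `Refines` -/

lemma posL_sum (b : List ℕ) : (posL b).sum = b.sum := by
  induction b with
  | nil => rfl
  | cons x t ih =>
    by_cases h : x = 0
    · simp [posL, List.filter, h] at ih ⊢; omega
    · simp [posL, List.filter, h] at ih ⊢; omega

lemma posL_append (l m : List ℕ) : posL (l ++ m) = posL l ++ posL m :=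
  List.filter_append ..

lemma posL_replicate (k : ℕ) : posL (List.replicate k 0) = [] := by
  simp [posL]

lemma posL_eq_self {α : List ℕ} (h : ∀ x ∈ α, 0 < x) : posL α = α := by
  rw [posL, List.filter_eq_self]
  intro x hx; simpa using (h x hx).ne'

lemma posL_pos {b : List ℕ} {x : ℕ} (hx : x ∈ posL b) : 0 < x := by
  have := List.of_mem_filter hx
  simp at this; omega

lemma posL_length_le (b : List ℕ) : (posL b).length ≤ b.length :=
  List.length_filter_le _ _

lemma refines_sum {β α : List ℕ} (h : Refines β α) : β.sum = α.sum := by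
  obtain ⟨L, h1, h2, -⟩ := h
  subst h1; subst h2
  simp [List.sum_flatten]

lemma refines_refl (β : List ℕ) : Refines β β := by
  refine ⟨β.map (fun x => [x]), ?_, ?_, ?_⟩
  · induction β with
    | nil => rfl
    | cons x t ih => simp [ih]
  · simp only [List.map_map]; conv_rhs => rw [← List.map_id β]
    congr 1
  · intro l hl; simp at hl; obtain ⟨x, -, rfl⟩ := hl; simp

/-- `posL` of a prefix is a prefix of `posL`. -/
lemma posL_take (b : List ℕ) (p : ℕ) :
    posL (b.take p) = (posL b).take (posL (b.take p)).length := by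
  have h1 : posL b = posL (b.take p) ++ posL (b.drop p) := by
    rw [← posL_append, List.take_append_drop]
  rw [h1, List.take_left]

lemma posL_take_length (b : List ℕ) (p : ℕ) :
    (b.take p).length + (posL b).length ≤ (posL (b.take p)).length + b.length := by
  have h1 : posL b = posL (b.take p) ++ posL (b.drop p) := by
    rw [← posL_append, List.take_append_drop]
  have h2 : (posL (b.drop p)).length ≤ (b.drop p).length := List.length_filter_le _ _
  have h3 : (b.take p).length + (b.drop p).length = b.length := by
    rw [← List.length_append, List.take_append_drop]
  rw [h1, List.length_append]
  omega

/-- Antisymmetry of the dominance order for lists of equal length. -/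
lemma domL_antisymm : ∀ (a b : List ℕ), a.length = b.length → DomL a b → DomL b a → a = b := by
  intro a
  induction a with
  | nil => intro b hb _ _; exact (List.length_eq_zero_iff.mp hb.symm).symm
  | cons x t ih =>
    intro b hb h1 h2
    match b with
    | y :: s =>
      have hx : x = y := by
        have e1 := h1 1
        have e2 := h2 1
        simp [List.take_succ_cons] at e1 e2
        omega
      subst hx
      have : t = s := by
        apply ih s (by simpa using hb)
        · intro k
          have := h1 (k+1); simp [List.take_succ_cons] at this; omega
        · intro k
          have := h2 (k+1); simp [List.take_succ_cons] at this; omega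
      rw [this]

/-- Lists of bounded length with bounded entries form a finite set. -/
lemma finite_bounded (n m : ℕ) :
    {l : List ℕ | l.length ≤ n ∧ ∀ x ∈ l, x ≤ m}.Finite := by
  have hfin : {l : List (Fin (m+1)) | l.length ≤ n}.Finite := List.finite_length_le _ n
  have himg := hfin.image (List.map (fun x : Fin (m+1) => (x : ℕ)))
  apply Set.Finite.subset himg
  intro l ⟨hl, hm⟩
  refine ⟨l.map (fun x => (⟨min x m, by omega⟩ : Fin (m+1))), by simpa using hl, ?_⟩
  rw [List.map_map]
  induction l with
  | nil => rfl
  | cons x t ih =>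
    have hx : x ≤ m := hm x (by simp)
    simp only [List.map_cons, Function.comp]
    rw [ih (by simpa using hl.trans' (by simp)) (fun y hy => hm y (by simp [hy]))]
    simp [Nat.min_eq_left hx]

/-- The key inequality about prefix sums of a refinement. -/
lemma take_sum_claim (L : List (List ℕ)) (hne : ∀ l ∈ L, l ≠ []) :
    ∀ j r : ℕ, j + L.flatten.length ≤ r + L.length →
      ((L.map List.sum).take j).sum ≤ (L.flatten.take r).sum := by
  induction L with
  | nil => intro j r _; simp
  | cons l L' ih =>
    intro j r hjr
    match j with
    | 0 => simp
    | (j' + 1) =>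
      have hl : l ≠ [] := hne l (by simp)
      have hL'ne : ∀ x ∈ L', x ≠ [] := fun x hx => hne x (by simp [hx])
      have hlen : L'.length ≤ L'.flatten.length := by
        calc L'.length = (L'.map List.length).length := by simp
        _ ≤ (L'.map List.length).sum := by
            apply List.length_le_sum_of_one_le
            intro i hi
            simp at hi
            obtain ⟨x, hx, rfl⟩ := hi
            have := hL'ne x hx
            cases x with
            | nil => simp at this
            | cons a t => simp
        _ = L'.flatten.length := by rw [List.length_flatten]
      rcases Nat.lt_or_ge r l.length with hr | hr
      · exfalso
        simp only [List.flatten_cons, List.length_append, List.map_cons,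
          List.length_cons] at hjr
        omega
      · simp only [List.flatten_cons, List.map_cons]
        rw [List.take_append, List.take_of_length_le hr, List.sum_append]
        have := ih hL'ne j' (r - l.length) (by
          simp only [List.flatten_cons, List.length_append, List.map_cons,
            List.length_cons] at hjr
          omega)
        rw [List.take_succ_cons, List.sum_cons]
        omega

/-- Main combinatorial lemma: any weak composition of length `n` whose positive part
refines `α` dominates `0^k α`. -/
lemma dom_of_refines {n k : ℕ} {α b : List ℕ}
    (hk : k + α.length = n) (hb : b.length = n) (hr : Refines (posL b) α) :
    DomL b (List.replicate k 0 ++ α) := by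
  intro p
  rcases Nat.lt_or_ge p n with hp | hp
  · have hLHS : ((List.replicate k 0 ++ α).take p).sum = (α.take (p - k)).sum := by
      rw [List.take_append]
      rw [List.sum_append]
      simp
    have hRHS : (b.take p).sum = ((posL b).take (posL (b.take p)).length).sum := by
      rw [← posL_take, posL_sum]
    rw [hLHS, hRHS]
    rcases Nat.lt_or_ge p k with hpk | hpk
    · rw [Nat.sub_eq_zero_of_le hpk.le]
      simp
    obtain ⟨L, hfl, hms, hne⟩ := hr
    rw [← hfl, ← hms]
    apply take_sum_claim L hne
    have hLlen : L.length = α.length := by rw [← hms]; simp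
    have hfl' : L.flatten.length = (posL b).length := by rw [hfl]
    have h1 := posL_take_length b p
    have h2 : (b.take p).length = p := by
      rw [List.length_take]; omega
    omega
  · have h1 : (List.replicate k 0 ++ α).take p = List.replicate k 0 ++ α := by
      apply List.take_of_length_le
      simp; omega
    have h2 : b.take p = b := by
      apply List.take_of_length_le; omega
    rw [h1, h2, List.sum_append, ← posL_sum b, refines_sum hr]
    simp

/-! ### Coefficient machinery -/

/-- The exponent function of a list. -/
noncomputable def expf (n : ℕ) (b : List ℕ) : Fin n →₀ ℕ :=
  Finsupp.equivFunOnFinite.symm (fun i => b.getD (i : ℕ) 0)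

lemma expf_apply (n : ℕ) (b : List ℕ) (i : Fin n) : expf n b i = b.getD (i : ℕ) 0 := rfl

lemma xlist_eq_monomial (n : ℕ) (b : List ℕ) : xlist n b = monomial (expf n b) 1 := by
  rw [xlist, ← prod_X_pow_eq_monomial]
  symm
  apply Finset.prod_subset (Finset.subset_univ _)
  intro i _ hi
  have : expf n b i = 0 := by
    by_contra h
    exact hi (Finsupp.mem_support_iff.mpr h)
  rw [this, pow_zero]

lemma expf_inj {n : ℕ} {b c : List ℕ} (hb : b.length = n) (hc : c.length = n)
    (h : expf n b = expf n c) : b = c := by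
  apply List.ext_getElem (by omega)
  intro i h1 h2
  have := DFunLike.congr_fun h (⟨i, by omega⟩ : Fin n)
  simpa [expf_apply, List.getD_eq_getElem?_getD, List.getElem?_eq_getElem, h1, h2] using this

lemma coeff_xlist (n : ℕ) (b : List ℕ) (u : Fin n →₀ ℕ) :
    coeff u (xlist n b) = if expf n b = u then 1 else 0 := by
  rw [xlist_eq_monomial, coeff_monomial]

open Classical in
/-- Coefficient of a conditioned finsum of `xlist`s. -/
lemma coeff_set_sum {n : ℕ} {P : List ℕ → Prop} (hfin : {b : List ℕ | P b}.Finite)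
    (hlen : ∀ b, P b → b.length = n) {c : List ℕ} (hc : c.length = n) :
    coeff (expf n c) (∑ᶠ (b : List ℕ) (_ : P b), xlist n b) = if P c then 1 else 0 := by
  classical
  have h1 : (∑ᶠ (b : List ℕ) (_ : P b), xlist n b) = ∑ b ∈ hfin.toFinset, xlist n b :=
    finsum_mem_eq_finite_toFinset_sum _ hfin
  rw [h1, coeff_sum]
  have h2 : ∀ b ∈ hfin.toFinset,
      coeff (expf n c) (xlist n b) = if b = c then (1 : ℤ) else 0 := by
    intro b hb
    rw [coeff_xlist]
    have hbP : P b := hfin.mem_toFinset.mp hb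
    congr 1
    simp only [eq_iff_iff]
    constructor
    · intro h; exact expf_inj (hlen b hbP) hc h
    · intro h; rw [h]
  rw [Finset.sum_congr rfl h2, Finset.sum_ite_eq' hfin.toFinset c (fun _ => (1 : ℤ))]
  simp [Set.Finite.mem_toFinset]

lemma sum_le_of_refines_posL {α b : List ℕ} (hr : Refines (posL b) α) :
    ∀ x ∈ b, x ≤ α.sum := by
  intro x hx
  calc x ≤ b.sum := List.le_sum_of_mem hx
  _ = (posL b).sum := (posL_sum b).symm
  _ = α.sum := refines_sum hr

lemma finite_Mq (n : ℕ) (γ : List ℕ) :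
    {b : List ℕ | b.length = n ∧ posL b = γ}.Finite := by
  apply (finite_bounded n γ.sum).subset
  rintro b ⟨h1, h2⟩
  refine ⟨h1.le, fun x hx => ?_⟩
  calc x ≤ b.sum := List.le_sum_of_mem hx
  _ = (posL b).sum := (posL_sum b).symm
  _ = γ.sum := by rw [h2]

lemma finite_Fq (n : ℕ) (α : List ℕ) :
    {b : List ℕ | b.length = n ∧ Refines (posL b) α}.Finite := by
  apply (finite_bounded n α.sum).subset
  rintro b ⟨h1, h2⟩
  exact ⟨h1.le, sum_le_of_refines_posL h2⟩

lemma finite_FSlide (n : ℕ) (a : List ℕ) :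
    {b : List ℕ | b.length = n ∧ DomL b a ∧ Refines (posL b) (posL a)}.Finite := by
  apply (finite_bounded n (posL a).sum).subset
  rintro b ⟨h1, -, h3⟩
  exact ⟨h1.le, sum_le_of_refines_posL h3⟩

/-- Coefficients of a quasisymmetric polynomial only depend on the positive part of
the exponent list. -/
lemma qsym_coeff {n : ℕ} {f : MvPolynomial (Fin n) ℤ} (hf : f ∈ QSymn n)
    {c d : List ℕ} (hc : c.length = n) (hd : d.length = n) (hcd : posL c = posL d) :
    coeff (expf n c) f = coeff (expf n d) f := by
  classical
  refine Submodule.span_induction ?_ ?_ ?_ ?_ hf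
  · rintro x ⟨γ, hγ, rfl⟩
    rw [show Mq n γ = ∑ᶠ (b : List ℕ) (_ : b.length = n ∧ posL b = γ), xlist n b from rfl,
      coeff_set_sum (finite_Mq n γ) (fun b hb => hb.1) hc,
      coeff_set_sum (finite_Mq n γ) (fun b hb => hb.1) hd]
    by_cases h : posL c = γ
    · rw [if_pos ⟨hc, h⟩, if_pos ⟨hd, hcd ▸ h⟩]
    · rw [if_neg (fun hh => h hh.2), if_neg (fun hh => h (hcd ▸ hh.2))]
  · simp
  · intro x y _ _ hx hy
    simp [coeff_add, hx, hy]
  · intro r x _ hx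
    rw [coeff_smul, coeff_smul, hx]

/-- `F_α(x_1,…,x_n)` is quasisymmetric. -/
lemma Fq_mem_QSymn (n : ℕ) (α : List ℕ) : Fq n α ∈ QSymn n := by
  classical
  set R : Set (List ℕ) := {β | Refines β α ∧ ∀ x ∈ β, 0 < x} with hR
  have hRfin : R.Finite := by
    apply (finite_bounded α.sum α.sum).subset
    rintro β ⟨h1, h2⟩
    have hsum : β.sum = α.sum := refines_sum h1
    constructor
    · calc β.length ≤ β.sum := List.length_le_sum_of_one_le _ (fun i hi => h2 i hi)
      _ = α.sum := hsum
    · intro x hx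
      calc x ≤ β.sum := List.le_sum_of_mem hx
      _ = α.sum := hsum
  have hset : {b : List ℕ | b.length = n ∧ Refines (posL b) α} =
      ⋃ β ∈ R, {b : List ℕ | b.length = n ∧ posL b = β} := by
    ext b
    simp only [Set.mem_setOf_eq, Set.mem_iUnion]
    constructor
    · rintro ⟨h1, h2⟩
      exact ⟨posL b, ⟨h2, fun x hx => posL_pos hx⟩, h1, rfl⟩
    · rintro ⟨β, ⟨hβ1, -⟩, h1, rfl⟩
      exact ⟨h1, hβ1⟩
  have key : Fq n α = ∑ᶠ β ∈ R, Mq n β := by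
    rw [show Fq n α = ∑ᶠ b ∈ {b : List ℕ | b.length = n ∧ Refines (posL b) α},
        xlist n b from rfl, hset]
    apply finsum_mem_biUnion
    · intro β _ β' _ hββ'
      apply Set.disjoint_left.mpr
      rintro b ⟨-, rfl⟩ ⟨-, h⟩
      exact hββ' h
    · exact hRfin
    · intro β _; exact finite_Mq n β
  rw [key, finsum_mem_eq_finite_toFinset_sum _ hRfin]
  apply Submodule.sum_mem
  intro β hβ
  apply Submodule.subset_span
  exact ⟨β, (hRfin.mem_toFinset.mp hβ).2, rfl⟩

lemma finsum_Prop_congr {M : Type*} [AddCommMonoid M] {p q : Prop} (h : p ↔ q) (x : M) :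
    (∑ᶠ _ : p, x) = ∑ᶠ _ : q, x :=
  finsum_congr_Prop (propext h) (fun _ => rfl)

/-- Part 2: `𝔉_{0^k α} = F_α(x_1,…,x_n)`. -/
lemma FSlide_eq_Fq {n k : ℕ} {α : List ℕ} (hα : ∀ x ∈ α, 0 < x) (hk : k + α.length = n) :
    FSlide n (List.replicate k 0 ++ α) = Fq n α := by
  have hpos : posL (List.replicate k 0 ++ α) = α := by
    rw [posL_append, posL_replicate, posL_eq_self hα, List.nil_append]
  rw [FSlide, Fq]
  apply finsum_congr
  intro b
  apply finsum_Prop_congr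
  rw [hpos]
  constructor
  · rintro ⟨h1, -, h3⟩; exact ⟨h1, h3⟩
  · rintro ⟨h1, h2⟩
    exact ⟨h1, dom_of_refines hk h1 h2, h2⟩

/-- For a weak composition `a` of length `n`, the fundamental slide polynomial `𝔉_a` is
quasisymmetric if and only if `a = 0^k α` for a strong composition `α` of length `n - k`;
moreover `𝔉_{0^k α} = F_α(x_1, …, x_n)`.  Hence the fundamental slide basis lifts the
fundamental quasisymmetric basis of `QSym_n`. -/
theorem fslide_lifts_fundamental (n : ℕ) (a : List ℕ) (ha : a.length = n) :
    (FSlide n a ∈ QSymn n ↔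
      ∃ (k : ℕ) (α : List ℕ), (∀ x ∈ α, 0 < x) ∧ k + α.length = n ∧
        a = List.replicate k 0 ++ α) ∧
    (∀ (k : ℕ) (α : List ℕ), (∀ x ∈ α, 0 < x) → k + α.length = n →
      a = List.replicate k 0 ++ α → FSlide n a = Fq n α) := by
  constructor
  · constructor
    · -- forward direction
      intro hf
      classical
      set α := posL a with hαdef
      have hαlen : α.length ≤ n := ha ▸ posL_length_le a
      set k := n - α.length with hkdef
      have hk : k + α.length = n := by omega
      set b' := List.replicate k 0 ++ α with hb'def
      have hb'len : b'.length = n := by simp [hb'def]; omega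
      have hposb' : posL b' = posL a := by
        rw [hb'def, posL_append, posL_replicate, posL_eq_self (fun x hx => posL_pos hx),
          List.nil_append]
      -- the slide polynomial membership predicate
      have hPa : a.length = n ∧ DomL a a ∧ Refines (posL a) (posL a) :=
        ⟨ha, fun p => le_refl _, refines_refl _⟩
      have hca : coeff (expf n a) (FSlide n a) = 1 := by
        rw [FSlide, coeff_set_sum (finite_FSlide n a) (fun b hb => hb.1) ha]
        exact if_pos hPa
      have hcb' : coeff (expf n b') (FSlide n a) =
          if b'.length = n ∧ DomL b' a ∧ Refines (posL b') (posL a) then 1 else 0 := by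
        rw [FSlide, coeff_set_sum (finite_FSlide n a) (fun b hb => hb.1) hb'len]
        congr
      have heq : coeff (expf n b') (FSlide n a) = coeff (expf n a) (FSlide n a) :=
        qsym_coeff hf hb'len ha hposb'
      rw [hca, hcb'] at heq
      have hPb' : b'.length = n ∧ DomL b' a ∧ Refines (posL b') (posL a) := by
        by_contra h
        rw [if_neg h] at heq
        exact zero_ne_one heq
      -- b' dominates a, and a dominates b'
      have h1 : DomL b' a := hPb'.2.1
      have h2 : DomL a b' := dom_of_refines hk ha (refines_refl α)
      have hab' : a = b' := domL_antisymm a b' (by omega) h2 h1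
      exact ⟨k, α, fun x hx => posL_pos hx, hk, hab'⟩
    · -- backward direction
      rintro ⟨k, β, hβ, hk, rfl⟩
      rw [FSlide_eq_Fq hβ hk]
      exact Fq_mem_QSymn n β
  · rintro k β hβ hk rfl
    exact FSlide_eq_Fq hβ hk
end
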